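/- arXiv:2506.03223 — 2 statements merged into one kernel-verified Lean document; each statement's English description precedes it below -/
import Mathlib

section
/- For every integer ℓ ≥ 8 with ℓ not divisible by 3, there exists a homomorphism from the tight ℓ-cycle C_ℓ³ to C₄³ and a homomorphism from C_ℓ³ to C₅³. Moreover, there exists a homomorphism from C₇³ to each of C₄³, F₁, and F₂. -/
open scoped Classical

noncomputable section

/-- The tight `ℓ`-cycle `C_ℓ³`: the 3-graph on `ZMod ℓ` (the vertex set `{1,…,ℓ}` in cyclic
order) whose edges are the `ℓ` consecutive triples `{i, i+1, i+2}` in the cyclic order. -/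
def tightCycle (ℓ : ℕ) : Finset (Finset (ZMod ℓ)) :=
  (Finset.range ℓ).image
    (fun i => ({(i : ZMod ℓ), (i : ZMod ℓ) + 1, (i : ZMod ℓ) + 2} : Finset (ZMod ℓ)))

/-- The 3-graph `F₁` on the vertex set `{1,2,3,4,5}` (realised inside `ZMod 5`). -/
def F1 : Finset (Finset (ZMod 5)) :=
  {({1, 2, 3} : Finset (ZMod 5)), {1, 3, 4}, {1, 4, 2}, {1, 4, 5}, {2, 3, 4}}

/-- The 3-graph `F₂` on the vertex set `{1,2,3,4,5,6}` (realised inside `ZMod 6`). -/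
def F2 : Finset (Finset (ZMod 6)) :=
  {({1, 2, 3} : Finset (ZMod 6)), {1, 3, 4}, {1, 4, 5}, {1, 5, 6}, {1, 6, 2}, {2, 3, 4}}

/-- `IsHom f F G`: `f` is a homomorphism of 3-graphs from `F` to `G`, i.e. a (not
necessarily injective) vertex map such that the image of every edge of `F` has three
distinct vertices and is an edge of `G`. -/
def IsHom {α β : Type} [DecidableEq β] (f : α → β)
    (F : Finset (Finset α)) (G : Finset (Finset β)) : Prop :=
  ∀ e ∈ F, (e.image f).card = 3 ∧ e.image f ∈ G

/-! Any closed walk of length `ℓ` in `ZMod k` whose steps are `+1` or `-2`, never two `-2` in a row,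
is a homomorphism `C_ℓ³ → C_k³`: two consecutive steps always visit a triple `{c, c + 1, c + 2}`.
With `m` steps `-2` placed at the first `m` odd positions (room for them needs `2 m ≤ ℓ`) the walk
closes up iff `ℓ ≡ 3 m (mod k)`. As `3` is invertible mod `4` and mod `5`, for `k = 4, 5` such an
`m < k` exists, and `2 m ≤ ℓ` once `ℓ ≥ 8`; for `ℓ = 7`, `k = 4` take `m = 1`. The maps from `C₇³`
to `F₁` and `F₂` are explicit. -/

lemma mem_tightCycle {ℓ : ℕ} {e : Finset (ZMod ℓ)} :
    e ∈ tightCycle ℓ ↔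
      ∃ n < ℓ, ({(n : ZMod ℓ), (n : ZMod ℓ) + 1, (n : ZMod ℓ) + 2} : Finset _) = e := by
  simp [tightCycle]

lemma triple_mem_tightCycle {k : ℕ} [NeZero k] (c : ZMod k) :
    ({c, c + 1, c + 2} : Finset (ZMod k)) ∈ tightCycle k :=
  mem_tightCycle.2 ⟨c.val, c.val_lt, by rw [ZMod.natCast_zmod_val]⟩

lemma card_triple {k : ℕ} (hk : 3 ≤ k) (c : ZMod k) :
    ({c, c + 1, c + 2} : Finset (ZMod k)).card = 3 := by
  have hcast : ∀ i j : ℕ, i < k → j < k → (i : ZMod k) = j → i = j := fun i j hi hj h => by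
    rwa [ZMod.natCast_eq_natCast_iff', Nat.mod_eq_of_lt hi, Nat.mod_eq_of_lt hj] at h
  have h01 : (0 : ZMod k) ≠ 1 := fun h => by simpa using hcast 0 1 (by omega) (by omega) (by simpa)
  have h02 : (0 : ZMod k) ≠ 2 := fun h => by simpa using hcast 0 2 (by omega) (by omega) (by simpa)
  have h12 : (1 : ZMod k) ≠ 2 := fun h => by simpa using hcast 1 2 (by omega) (by omega) (by simpa)
  rw [Finset.card_eq_three]
  refine ⟨c, c + 1, c + 2, ?_, ?_, ?_, rfl⟩ <;> simp [h01.symm, h02.symm, h12]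

lemma card_eq_three_and_mem_tightCycle_of_steps {k : ℕ} (hk : 3 ≤ k) (b s t : ZMod k)
    (hs : s = 1 ∨ s = -2) (ht : t = 1 ∨ t = -2) (hst : s = 1 ∨ t = 1) :
    ({b, b + s, b + s + t} : Finset (ZMod k)).card = 3 ∧
      ({b, b + s, b + s + t} : Finset (ZMod k)) ∈ tightCycle k := by
  have : NeZero k := ⟨by omega⟩
  obtain ⟨c, hc⟩ : ∃ c : ZMod k, ({b, b + s, b + s + t} : Finset (ZMod k)) = {c, c + 1, c + 2} := by
    rcases hst with rfl | rfl
    · rcases ht with rfl | rfl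
      · exact ⟨b, by ring_nf⟩
      · refine ⟨b - 1, ?_⟩
        rw [sub_add_cancel, show b - 1 + 2 = b + 1 by ring, show b + 1 + -2 = b - 1 by ring]
        ext; simp only [Finset.mem_insert, Finset.mem_singleton]; tauto
    · rcases hs with rfl | rfl
      · exact ⟨b, by ring_nf⟩
      · refine ⟨b - 2, ?_⟩
        rw [sub_add_cancel, show b - 2 + 1 = b - 1 by ring, show b + -2 + 1 = b - 1 by ring,
          ← sub_eq_add_neg]
        ext; simp only [Finset.mem_insert, Finset.mem_singleton]; tauto
  rw [hc]
  exact ⟨card_triple hk c, triple_mem_tightCycle c⟩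

lemma isHom_tightCycle_of_triples {β : Type} [DecidableEq β] {ℓ : ℕ} (G : Finset (Finset β))
    (g : ℕ → β) (hℓ : g ℓ = g 0) (hℓ₁ : g (ℓ + 1) = g 1)
    (htriple : ∀ n < ℓ, ({g n, g (n + 1), g (n + 2)} : Finset β).card = 3 ∧
      ({g n, g (n + 1), g (n + 2)} : Finset β) ∈ G) :
    IsHom (fun x : ZMod ℓ => g x.val) (tightCycle ℓ) G := by
  rintro _ he
  obtain ⟨n, hn, rfl⟩ := mem_tightCycle.1 he
  have hmod : ∀ j ≤ ℓ + 1, g (j % ℓ) = g j := by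
    intro j hj
    obtain hj | rfl | rfl : j < ℓ ∨ j = ℓ ∨ j = ℓ + 1 := by omega
    · rw [Nat.mod_eq_of_lt hj]
    · rw [Nat.mod_self, hℓ]
    · rcases eq_or_ne ℓ 1 with rfl | hne
      · rw [Nat.mod_one, hℓ₁, hℓ]
      · rw [Nat.add_mod_left, Nat.one_mod_eq_one.2 hne, hℓ₁]
  have h₁ : (n : ZMod ℓ) + 1 = ((n + 1 : ℕ) : ZMod ℓ) := by push_cast; rfl
  have h₂ : (n : ZMod ℓ) + 2 = ((n + 2 : ℕ) : ZMod ℓ) := by push_cast; rfl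
  simp only [Finset.image_insert, Finset.image_singleton]
  rw [h₁, h₂, ZMod.val_natCast, ZMod.val_natCast, ZMod.val_natCast,
    hmod n (by omega), hmod (n + 1) (by omega), hmod (n + 2) (by omega)]
  exact htriple n hn

/-- The walk with steps `+1`, except for `-2` at the first `m` odd positions. -/
def zigzag (m n : ℕ) : ℤ := n - 3 * min (n / 2) m

lemma zigzag_step (m n : ℕ) :
    zigzag m (n + 1) - zigzag m n = 1 ∨ zigzag m (n + 1) - zigzag m n = -2 := by
  unfold zigzag; omega

lemma zigzag_step_eq_one_or (m n : ℕ) :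
    zigzag m (n + 1) - zigzag m n = 1 ∨ zigzag m (n + 2) - zigzag m (n + 1) = 1 := by
  unfold zigzag; omega

lemma zigzag_add_of_lt_two {m ℓ j : ℕ} (hm : 2 * m ≤ ℓ) (hj : j < 2) :
    zigzag m (ℓ + j) = zigzag m j + (ℓ - 3 * m) := by
  unfold zigzag; omega

lemma exists_isHom_tightCycle_of_dvd {k ℓ m : ℕ} (hk : 3 ≤ k) (hm : 2 * m ≤ ℓ)
    (hdvd : (k : ℤ) ∣ ℓ - 3 * m) :
    ∃ f : ZMod ℓ → ZMod k, IsHom f (tightCycle ℓ) (tightCycle k) := by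
  have hclosed (j : ℕ) (hj : j < 2) : ((zigzag m (ℓ + j) : ℤ) : ZMod k) = zigzag m j := by
    rw [zigzag_add_of_lt_two hm hj, Int.cast_add,
      (ZMod.intCast_zmod_eq_zero_iff_dvd _ _).2 hdvd, add_zero]
  have hstep (n : ℕ) : ((zigzag m (n + 1) : ℤ) : ZMod k) =
      zigzag m n + ((zigzag m (n + 1) - zigzag m n : ℤ) : ZMod k) := by push_cast; ring
  refine ⟨_, isHom_tightCycle_of_triples _ (fun n => ((zigzag m n : ℤ) : ZMod k))
    (hclosed 0 (by norm_num)) (hclosed 1 (by norm_num)) fun n _ => ?_⟩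
  rw [hstep (n + 1), hstep n]
  apply card_eq_three_and_mem_tightCycle_of_steps hk
  · rcases zigzag_step m n with h | h <;> simp [h]
  · rcases zigzag_step m (n + 1) with h | h <;> simp [h]
  · rcases zigzag_step_eq_one_or m n with h | h <;> simp [h]

/-- **Claim (homomorphisms of tight cycles).** For every `ℓ ≥ 8` not divisible by 3
there are homomorphisms `C_ℓ³ → C₄³` and `C_ℓ³ → C₅³`; moreover there are
homomorphisms `C₇³ → C₄³`, `C₇³ → F₁` and `C₇³ → F₂`. -/
theorem tight_cycle_homomorphisms :
    (∀ ℓ : ℕ, 8 ≤ ℓ → ¬ (3 ∣ ℓ) →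
      (∃ f : ZMod ℓ → ZMod 4, IsHom f (tightCycle ℓ) (tightCycle 4)) ∧
      (∃ f : ZMod ℓ → ZMod 5, IsHom f (tightCycle ℓ) (tightCycle 5))) ∧
    (∃ f : ZMod 7 → ZMod 4, IsHom f (tightCycle 7) (tightCycle 4)) ∧
    (∃ f : ZMod 7 → ZMod 5, IsHom f (tightCycle 7) F1) ∧
    (∃ f : ZMod 7 → ZMod 6, IsHom f (tightCycle 7) F2) := by
  refine ⟨fun ℓ hℓ _ => ⟨?_, ?_⟩, ?_, ?_, ?_⟩
  · exact exists_isHom_tightCycle_of_dvd (m := 3 * ℓ % 4) (by norm_num) (by omega) (by omega)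
  · exact exists_isHom_tightCycle_of_dvd (m := 2 * ℓ % 5) (by norm_num) (by omega) (by omega)
  · exact exists_isHom_tightCycle_of_dvd (m := 1) (by norm_num) (by norm_num) (by norm_num)
  · exact ⟨_, isHom_tightCycle_of_triples F1 (fun n => ![0, 1, 4, 2, 3, 1, 4] (Fin.ofNat 7 n))
      rfl rfl (by decide)⟩
  · exact ⟨_, isHom_tightCycle_of_triples F2 (fun n => ![0, 1, 2, 3, 4, 1, 5] (Fin.ofNat 7 n))
      rfl rfl (by decide)⟩
end
end

section
/- Let r ≥ 2 and let F be a blowup-invariant family of r-graphs. If H is an F-free r-graph on n vertices with exactly ex(n,F) edges, then Δ(H) − δ(H) ≤ C(n−2, r−2), where Δ(H) and δ(H) are the maximum and minimum degree of H. -/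
open scoped Classical

noncomputable section

/-- `Contains F H`: the hypergraph `H` contains a copy of `F` as a (not necessarily
induced) subgraph, i.e. there is an injection of vertices mapping edges to edges. -/
def Contains {α β : Type} [DecidableEq β] (F : Finset (Finset α))
    (H : Finset (Finset β)) : Prop :=
  ∃ f : α → β, Function.Injective f ∧ ∀ e ∈ F, e.image f ∈ H

/-- `H` is `F`-free for a family `F` of hypergraphs: `H` contains no member of `F`. -/
def FamFree (F : Set (Σ m : ℕ, Finset (Finset (Fin m)))) {n : ℕ}
    (H : Finset (Finset (Fin n))) : Prop :=
  ∀ p ∈ F, ¬ Contains p.2 H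

/-- `H` is `r`-uniform: every edge has exactly `r` vertices. -/
def IsUniform (r : ℕ) {n : ℕ} (H : Finset (Finset (Fin n))) : Prop :=
  ∀ e ∈ H, e.card = r

/-- The Turán number `ex(n, F)` for `r`-graphs: the maximum number of edges of an
`F`-free `r`-uniform hypergraph on `n` vertices. -/
def exNum (r : ℕ) (F : Set (Σ m : ℕ, Finset (Finset (Fin m)))) (n : ℕ) : ℕ :=
  sSup {k : ℕ | ∃ H : Finset (Finset (Fin n)), IsUniform r H ∧ FamFree F H ∧ H.card = k}

/-- The Turán density `π(F) = inf_{n ≥ r} ex(n,F)/C(n,r)`, which equals the limit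
`lim_{n→∞} ex(n,F)/C(n,r)` since the ratio is non-increasing in `n`. -/
def turanDensity (r : ℕ) (F : Set (Σ m : ℕ, Finset (Finset (Fin m)))) : ℝ :=
  sInf {x : ℝ | ∃ n : ℕ, r ≤ n ∧ x = (exNum r F n : ℝ) / (n.choose r : ℝ)}

/-- The blowup of the `r`-graph `H` on `Fin m` along a map `g : Fin N → Fin m`
(the fibre of `g` over `v` is the set of clones of `v`): its edges are the `r`-sets
meeting `r` distinct fibres whose images form an edge of `H`. Every blowup of `H`
arises this way. -/
def blowup (r : ℕ) {m N : ℕ} (g : Fin N → Fin m) (H : Finset (Finset (Fin m))) :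
    Finset (Finset (Fin N)) :=
  Finset.univ.filter (fun e : Finset (Fin N) =>
    e.card = r ∧ (e.image g).card = r ∧ e.image g ∈ H)

/-- The family `F` is blowup-invariant: every blowup of every `F`-free `r`-graph
is `F`-free. -/
def BlowupInvariant (r : ℕ) (F : Set (Σ m : ℕ, Finset (Finset (Fin m)))) : Prop :=
  ∀ (m : ℕ) (H : Finset (Finset (Fin m))), IsUniform r H → FamFree F H →
    ∀ (N : ℕ) (g : Fin N → Fin m), FamFree F (blowup r g H)

/-- The degree of a vertex `v`: the number of edges of `H` containing `v`. -/
def degH {n : ℕ} (H : Finset (Finset (Fin n))) (v : Fin n) : ℕ :=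
  (H.filter (fun e => v ∈ e)).card

/-- The maximum degree `Δ(H)`. -/
def maxDeg {n : ℕ} (H : Finset (Finset (Fin n))) : ℕ :=
  Finset.univ.sup (degH H)

/-- The minimum degree `δ(H)`. -/
def minDeg {n : ℕ} (H : Finset (Finset (Fin n))) : ℕ :=
  sInf (Set.range (degH H))

/-!
Zykov symmetrization. Let `u` have maximum and `w` minimum degree, and turn `w` into a clone
of `u`. The resulting blowup of `H` is again an `F`-free `r`-graph on `n` vertices, so it has
at most `ex(n, F) = |H|` edges. It keeps the `|H| - d(w)` edges avoiding `w` and gains a copy,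
through `w`, of each of the `d(u) - d(u, w)` edges through `u` but not `w`, where `d(u, w)` is
the codegree. Hence `d(u) ≤ d(w) + d(u, w) ≤ d(w) + C(n - 2, r - 2)`.
-/

open Finset Function

def codegH {n : ℕ} (H : Finset (Finset (Fin n))) (u w : Fin n) : ℕ :=
  (H.filter fun e => u ∈ e ∧ w ∈ e).card

section

variable {r n : ℕ} {H : Finset (Finset (Fin n))}

theorem mem_blowup {m N : ℕ} {g : Fin N → Fin m} {H : Finset (Finset (Fin m))}
    {e : Finset (Fin N)} :
    e ∈ blowup r g H ↔ e.card = r ∧ (e.image g).card = r ∧ e.image g ∈ H := by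
  simp [blowup]

theorem IsUniform.blowup {m N : ℕ} (g : Fin N → Fin m) (H : Finset (Finset (Fin m))) :
    IsUniform r (blowup r g H) :=
  fun _ he => (mem_blowup.1 he).1

theorem card_le_exNum {F : Set (Σ m : ℕ, Finset (Finset (Fin m)))}
    (hH : IsUniform r H) (hfree : FamFree F H) : H.card ≤ exNum r F n :=
  le_csSup ⟨Fintype.card (Finset (Fin n)), by rintro _ ⟨H', -, -, rfl⟩; exact card_le_univ H'⟩
    ⟨H, hH, hfree, rfl⟩

theorem degH_eq_card_filter_add_codegH (u w : Fin n) :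
    degH H u = (H.filter fun e => u ∈ e ∧ w ∉ e).card + codegH H u w := by
  rw [degH, codegH, ← card_filter_add_card_filter_not (fun e => w ∉ e), filter_filter,
    filter_filter]
  simp only [not_not]

theorem codegH_le_choose (hH : IsUniform r H) {u w : Fin n} (huw : u ≠ w) :
    codegH H u w ≤ (n - 2).choose (r - 2) := by
  set S := ((univ : Finset (Fin n)).erase u).erase w
  have hS : S.card = n - 2 := by
    rw [card_erase_of_mem (mem_erase.2 ⟨huw.symm, mem_univ w⟩), card_erase_of_mem (mem_univ u),
      card_univ, Fintype.card_fin]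
    omega
  have hsub : (H.filter fun e => u ∈ e ∧ w ∈ e) ⊆
      (S.powersetCard (r - 2)).image fun t => insert u (insert w t) := by
    intro e he
    obtain ⟨he, hue, hwe⟩ := mem_filter.1 he
    have hwe' : w ∈ e.erase u := mem_erase.2 ⟨huw.symm, hwe⟩
    refine mem_image.2 ⟨(e.erase u).erase w, mem_powersetCard.2 ⟨?_, ?_⟩, ?_⟩
    · exact erase_subset_erase w (erase_subset_erase u (subset_univ e))
    · rw [card_erase_of_mem hwe', card_erase_of_mem hue, hH e he]
      omega
    · rw [insert_erase hwe', insert_erase hue]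
  calc codegH H u w ≤ ((S.powersetCard (r - 2)).image fun t => insert u (insert w t)).card :=
        card_le_card hsub
    _ ≤ (S.powersetCard (r - 2)).card := card_image_le
    _ = (n - 2).choose (r - 2) := by rw [card_powersetCard, hS]

theorem image_update_id_of_notMem {e : Finset (Fin n)} {u w : Fin n} (hw : w ∉ e) :
    e.image (update id w u) = e := by
  conv_rhs => rw [← image_id (s := e)]
  refine image_congr fun x hx => ?_
  exact update_of_ne (fun h : x = w => hw (h ▸ hx)) u id

theorem filter_notMem_subset_blowup (hH : IsUniform r H) (u w : Fin n) :
    H.filter (fun e => w ∉ e) ⊆ blowup r (update id w u) H := by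
  intro e he
  obtain ⟨he, hw⟩ := mem_filter.1 he
  rw [mem_blowup, image_update_id_of_notMem hw]
  exact ⟨hH e he, hH e he, he⟩

theorem image_insert_erase_subset_blowup (hH : IsUniform r H) (u w : Fin n) :
    (H.filter fun e => u ∈ e ∧ w ∉ e).image (fun e => insert w (e.erase u)) ⊆
      blowup r (update id w u) H := by
  intro e' he'
  obtain ⟨e, he, rfl⟩ := mem_image.1 he'
  obtain ⟨he, hue, hwe⟩ := mem_filter.1 he
  have hwe' : w ∉ e.erase u := fun h => hwe (mem_of_mem_erase h)
  have himage : (insert w (e.erase u)).image (update id w u) = e := by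
    rw [image_insert, image_update_id_of_notMem hwe', update_self, insert_erase hue]
  have hcard : (insert w (e.erase u)).card = r := by
    rw [card_insert_of_notMem hwe', card_erase_add_one hue, hH e he]
  rw [mem_blowup, himage]
  exact ⟨hcard, hH e he, he⟩

theorem card_add_degH_le_card_blowup_add (hH : IsUniform r H) (u w : Fin n) :
    H.card + degH H u ≤ (blowup r (update id w u) H).card + degH H w + codegH H u w := by
  rw [degH_eq_card_filter_add_codegH u w]
  set A := H.filter fun e => w ∉ e
  set D := H.filter fun e => u ∈ e ∧ w ∉ e
  set B := D.image fun e => insert w (e.erase u)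
  have hA : degH H w + A.card = H.card := card_filter_add_card_filter_not _
  have hB : B.card = D.card := by
    refine card_image_of_injOn fun e₁ he₁ e₂ he₂ h => ?_
    have hcancel : ∀ e ∈ D, insert u ((insert w (e.erase u)).erase w) = e := fun e he => by
      obtain ⟨-, hue, hwe⟩ := mem_filter.1 he
      rw [erase_insert fun h => hwe (mem_of_mem_erase h), insert_erase hue]
    rw [← hcancel e₁ he₁, ← hcancel e₂ he₂]
    exact congrArg (fun e => insert u (e.erase w)) h
  have hAB : Disjoint A B := disjoint_left.2 fun e heA heB => by
    obtain ⟨e₀, -, rfl⟩ := mem_image.1 heB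
    exact (mem_filter.1 heA).2 (mem_insert_self w _)
  have hunion : A.card + B.card ≤ (blowup r (update id w u) H).card := by
    rw [← card_union_of_disjoint hAB]
    exact card_le_card (union_subset (filter_notMem_subset_blowup hH u w)
      (image_insert_erase_subset_blowup hH u w))
  omega

theorem maxDeg_le_minDeg_add_of_forall {c : ℕ} (h : ∀ u w, degH H u ≤ degH H w + c) :
    maxDeg H ≤ minDeg H + c := by
  rcases isEmpty_or_nonempty (Fin n) with hn | hn
  · simp [maxDeg, univ_eq_empty]
  obtain ⟨w, hw⟩ := Set.mem_range.1 (Nat.sInf_mem (Set.range_nonempty (degH H)))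
  rw [minDeg, ← hw]
  exact Finset.sup_le fun u _ => h u w

end

theorem blowup_invariant_degree_gap_general (r : ℕ)
    (F : Set (Σ m : ℕ, Finset (Finset (Fin m)))) (hinv : BlowupInvariant r F)
    (n : ℕ) (H : Finset (Finset (Fin n))) (hH : IsUniform r H) (hfree : FamFree F H)
    (hmax : H.card = exNum r F n) :
    maxDeg H ≤ minDeg H + (n - 2).choose (r - 2) := by
  refine maxDeg_le_minDeg_add_of_forall fun u w => ?_
  rcases eq_or_ne u w with rfl | huw
  · exact Nat.le_add_right _ _
  have hsym := card_add_degH_le_card_blowup_add hH u w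
  have hex := card_le_exNum (IsUniform.blowup (update id w u) H) (hinv n H hH hfree n _)
  have hcodeg := codegH_le_choose hH huw
  omega

/-- **Proposition (smoothness for blowup-invariant families).** Let `r ≥ 2` and let `F`
be a blowup-invariant family of `r`-graphs. Every `F`-free `r`-graph on `n` vertices
with exactly `ex(n,F)` edges satisfies `Δ(H) − δ(H) ≤ C(n−2, r−2)`. -/
theorem blowup_invariant_degree_gap (r : ℕ) (hr : 2 ≤ r)
    (F : Set (Σ m : ℕ, Finset (Finset (Fin m)))) (hinv : BlowupInvariant r F)
    (n : ℕ) (H : Finset (Finset (Fin n))) (hH : IsUniform r H) (hfree : FamFree F H)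
    (hmax : H.card = exNum r F n) :
    maxDeg H ≤ minDeg H + (n - 2).choose (r - 2) :=
  blowup_invariant_degree_gap_general r F hinv n H hH hfree hmax
end
end
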